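/- Let α, β, F ∈ ℂ, k ∈ ℤ∖{0}, a ∈ ℂ∖{0}, d ∈ ℂ and m ∈ ℂ, and assume q := kα − α − kFd ∈ ℤ. On V define linear operators 𝕃_n, 𝕀_n by 𝕃_n(v_t) = (α+t+βn)v_{n+t} and 𝕀_n(v_t) = F·v_{n+t}, and define the linear map φ by φ(v_t) = aᵗ·m·v_{kt+q}. Then for all n ∈ ℤ: φ ∘ 𝕃_n = ((1/k)aⁿ·𝕃_{kn} + aⁿd·𝕀_{kn}) ∘ φ and φ ∘ 𝕀_n = aⁿ·𝕀_{kn} ∘ φ; consequently the twisted operators satisfy (φ∘𝕃_n)(v_t) = (α+t+βn)·a^{n+t}·m·v_{k(n+t)+q} and (φ∘𝕀_n)(v_t) = F·a^{n+t}·m·v_{k(n+t)+q} for all n, t ∈ ℤ. -/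

import Mathlib

/-- The ℂ-vector space with basis `{v t : t ∈ ℤ}` (finitely supported functions ℤ → ℂ). -/
abbrev V : Type := ℤ →₀ ℂ

/-- The basis vector `v t`. -/
noncomputable def v (t : ℤ) : V := Finsupp.single t 1

/-- The linear operator on `V` determined by its values on the basis vectors. -/
noncomputable def op (f : ℤ → V) : V →ₗ[ℂ] V := Finsupp.lift V ℂ ℤ f

/-- The operator `𝕃 n` of the module `A(α,β,F)`: `𝕃 n (v t) = (α+t+βn) v (n+t)`. -/
noncomputable def Lop (α β : ℂ) (n : ℤ) : V →ₗ[ℂ] V :=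
  op fun t => (α + t + β * n) • v (n + t)

/-- The operator `𝕀 n` of the module `A(α,β,F)`: `𝕀 n (v t) = F • v (n+t)`. -/
noncomputable def Iop (F : ℂ) (n : ℤ) : V →ₗ[ℂ] V :=
  op fun t => F • v (n + t)

/-- The twisting linear map `φ (v t) = aᵗ m • v (kt+q)`. -/
noncomputable def φmap (a m : ℂ) (k q : ℤ) : V →ₗ[ℂ] V :=
  op fun t => (a ^ t * m) • v (k * t + q)

theorem op_apply_v (f : ℤ → V) (t : ℤ) : op f (v t) = f t := by
  rw [op, v, Finsupp.lift_apply, Finsupp.sum_single_index (zero_smul ℂ (f t)), one_smul]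

theorem linearMap_ext_v {f g : V →ₗ[ℂ] V} (h : ∀ t, f (v t) = g (v t)) : f = g :=
  Finsupp.lhom_ext' fun t => LinearMap.ext_ring (h t)

@[simp]
theorem Lop_apply_v (α β : ℂ) (n t : ℤ) : Lop α β n (v t) = (α + t + β * n) • v (n + t) :=
  op_apply_v _ t

@[simp]
theorem Iop_apply_v (F : ℂ) (n t : ℤ) : Iop F n (v t) = F • v (n + t) :=
  op_apply_v _ t

@[simp]
theorem φmap_apply_v (a m : ℂ) (k q t : ℤ) : φmap a m k q (v t) = (a ^ t * m) • v (k * t + q) :=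
  op_apply_v _ t

theorem φmap_Lop_apply_v (α β a m : ℂ) (k q n t : ℤ) :
    φmap a m k q (Lop α β n (v t))
      = ((α + t + β * n) * a ^ (n + t) * m) • v (k * (n + t) + q) := by
  rw [Lop_apply_v, map_smul, φmap_apply_v, smul_smul, mul_assoc]

theorem φmap_Iop_apply_v (F a m : ℂ) (k q n t : ℤ) :
    φmap a m k q (Iop F n (v t)) = (F * a ^ (n + t) * m) • v (k * (n + t) + q) := by
  rw [Iop_apply_v, map_smul, φmap_apply_v, smul_smul, mul_assoc]

/-- This is where the condition `q = kα - α - kFd` enters: the shift of `φ` by `q` is exactly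
compensated by the `𝕀`-correction `d F`. -/
theorem intertwine_coeff (α β F d : ℂ) (k q n t : ℤ) (hk : (k : ℂ) ≠ 0)
    (hq : (q : ℂ) = k * α - α - k * F * d) :
    1 / (k : ℂ) * (α + ((k * t + q : ℤ) : ℂ) + β * ((k * n : ℤ) : ℂ)) + d * F
      = α + t + β * n := by
  push_cast
  rw [hq]
  field_simp
  ring

theorem A_abF_intertwine (α β F : ℂ) (k : ℤ) (hk : k ≠ 0) (a : ℂ) (ha : a ≠ 0)
    (d m : ℂ) (q : ℤ) (hq : (q : ℂ) = k * α - α - k * F * d) :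
    (∀ n : ℤ, φmap a m k q ∘ₗ Lop α β n
        = ((1 / (k : ℂ) * a ^ n) • Lop α β (k * n) + (a ^ n * d) • Iop F (k * n))
            ∘ₗ φmap a m k q) ∧
    (∀ n : ℤ, φmap a m k q ∘ₗ Iop F n = (a ^ n • Iop F (k * n)) ∘ₗ φmap a m k q) ∧
    (∀ n t : ℤ, φmap a m k q (Lop α β n (v t))
        = ((α + t + β * n) * a ^ (n + t) * m) • v (k * (n + t) + q)) ∧
    (∀ n t : ℤ, φmap a m k q (Iop F n (v t))
        = (F * a ^ (n + t) * m) • v (k * (n + t) + q)) := by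
  have hindex (n t : ℤ) : k * n + (k * t + q) = k * (n + t) + q := by ring
  refine ⟨fun n => linearMap_ext_v fun t => ?_, fun n => linearMap_ext_v fun t => ?_,
    φmap_Lop_apply_v α β a m k q, φmap_Iop_apply_v F a m k q⟩
  · simp only [LinearMap.comp_apply, LinearMap.add_apply, LinearMap.smul_apply,
      φmap_apply_v, map_smul, Lop_apply_v, Iop_apply_v, smul_smul,
      ← add_smul, hindex]
    congr 1
    rw [← intertwine_coeff α β F d k q n t (Int.cast_ne_zero.mpr hk) hq, zpow_add₀ ha]
    ring
  · simp only [LinearMap.comp_apply, LinearMap.smul_apply, φmap_apply_v, map_smul,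
      Iop_apply_v, smul_smul, hindex]
    congr 1
    rw [zpow_add₀ ha]
    ring
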